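/- arXiv:2310.00133 — 8 statements merged into one kernel-verified Lean document; each statement's English description precedes it below -/
import Mathlib

section
/- Let D_σ(u) = u - σ²∇h_σ(u) where h_σ(u) = -log p_u(u) and p_u is the convolution of a non-degenerate probability density p_x on ℝⁿ with the Gaussian density of variance σ². Then the Jacobian of D_σ at every point u ∈ ℝⁿ is positive definite, i.e., I - σ² H h_σ(u) ≻ 0, where H h_σ denotes the Hessian of h_σ. -/
open MeasureTheory Real

set_option maxHeartbeats 1000000
set_option synthInstance.maxHeartbeats 200000

noncomputable section
namespace Stmt0Aux

variable {n : ℕ}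

abbrev Esp (n : ℕ) := EuclideanSpace ℝ (Fin n)

def k (σ : ℝ) (p : Esp n → ℝ) (u x : Esp n) : ℝ :=
  Real.exp (-‖u - x‖ ^ 2 / (2 * σ ^ 2)) * p x

def k₁ (σ : ℝ) (p : Esp n → ℝ) (u x : Esp n) : Esp n →L[ℝ] ℝ :=
  ((σ ^ 2)⁻¹ * k σ p u x) • innerSL ℝ (x - u)

def innerB (n : ℕ) : Esp n →L[ℝ] Esp n →L[ℝ] ℝ := innerSL ℝ

def k₂ (σ : ℝ) (p : Esp n → ℝ) (u x : Esp n) : Esp n →L[ℝ] Esp n →L[ℝ] ℝ :=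
  ((σ ^ 2)⁻¹ * ((σ ^ 2)⁻¹ * k σ p u x)) •
      ((innerSL ℝ (x - u)).smulRight (innerSL ℝ (x - u)))
    - ((σ ^ 2)⁻¹ * k σ p u x) • innerB n

section basic
variable (σ : ℝ) (p : Esp n → ℝ)

theorem k_pos (hp : ∀ x, 0 < p x) (u x : Esp n) : 0 < k σ p u x :=
  mul_pos (Real.exp_pos _) (hp x)

theorem exp_fac_le_one (σ : ℝ) (u x : Esp n) :
    Real.exp (-‖u - x‖ ^ 2 / (2 * σ ^ 2)) ≤ 1 := by
  apply Real.exp_le_one_iff.mpr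
  have h1 : (0:ℝ) ≤ ‖u - x‖ ^ 2 := by positivity
  have h2 : (0:ℝ) ≤ 2 * σ ^ 2 := by positivity
  exact div_nonpos_of_nonpos_of_nonneg (by linarith) h2

theorem k_le (hp : ∀ x, 0 < p x) (u x : Esp n) : k σ p u x ≤ p x :=
  calc k σ p u x ≤ 1 * p x :=
        mul_le_mul_of_nonneg_right (exp_fac_le_one σ u x) (hp x).le
    _ = p x := one_mul _

/-- `t * exp (-t) ≤ 1` in the form needed. -/
theorem key_exp (t : ℝ) : t * Real.exp (-t) ≤ 1 := by
  have h6 : t ≤ Real.exp t := by linarith [Real.add_one_le_exp t]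
  rw [Real.exp_neg]
  have h7 := mul_le_mul_of_nonneg_right h6 (inv_nonneg.mpr (Real.exp_pos t).le)
  rwa [mul_inv_cancel₀ (Real.exp_pos t).ne'] at h7

theorem sq_mul_exp_le (σ : ℝ) (hσ : 0 < σ) (r : ℝ) :
    r ^ 2 * Real.exp (-r ^ 2 / (2 * σ ^ 2)) ≤ 2 * σ ^ 2 := by
  have h2 : (0:ℝ) < 2 * σ ^ 2 := by positivity
  have h4 : r ^ 2 / (2 * σ ^ 2) * (2 * σ ^ 2) = r ^ 2 := div_mul_cancel₀ _ h2.ne'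
  rw [neg_div]
  calc r ^ 2 * Real.exp (-(r ^ 2 / (2 * σ ^ 2)))
      = r ^ 2 / (2 * σ ^ 2) * (2 * σ ^ 2) * Real.exp (-(r ^ 2 / (2 * σ ^ 2))) := by rw [h4]
    _ = r ^ 2 / (2 * σ ^ 2) * Real.exp (-(r ^ 2 / (2 * σ ^ 2))) * (2 * σ ^ 2) := by ring
    _ ≤ 1 * (2 * σ ^ 2) := mul_le_mul_of_nonneg_right (key_exp _) h2.le
    _ = 2 * σ ^ 2 := one_mul _

theorem norm_mul_exp_le (σ : ℝ) (hσ : 0 < σ) (r : ℝ) (hr : 0 ≤ r) :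
    r * Real.exp (-r ^ 2 / (2 * σ ^ 2)) ≤ 1 + 2 * σ ^ 2 := by
  have h1 : Real.exp (-r ^ 2 / (2 * σ ^ 2)) ≤ 1 := by
    apply Real.exp_le_one_iff.mpr
    have : (0:ℝ) ≤ 2 * σ ^ 2 := by positivity
    exact div_nonpos_of_nonpos_of_nonneg (by nlinarith) this
  have h2 := sq_mul_exp_le σ hσ r
  have h3 : r ≤ 1 + r ^ 2 := by nlinarith
  nlinarith [Real.exp_pos (-r ^ 2 / (2 * σ ^ 2))]

end basic

section meas
variable {σ : ℝ} {p : Esp n → ℝ}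

theorem cont_exp_fac (σ : ℝ) (u : Esp n) :
    Continuous fun x : Esp n => Real.exp (-‖u - x‖ ^ 2 / (2 * σ ^ 2)) := by
  fun_prop

theorem k_aesm (σ : ℝ) (hint : Integrable p) (u : Esp n) :
    AEStronglyMeasurable (k σ p u) volume :=
  ((cont_exp_fac σ u).aestronglyMeasurable).mul hint.1

theorem k_int (hp : ∀ x, 0 < p x) (hint : Integrable p) (u : Esp n) :
    Integrable (k σ p u) := by
  refine hint.mono' (k_aesm σ hint u) (Filter.Eventually.of_forall fun x => ?_)
  rw [Real.norm_eq_abs, abs_of_nonneg (k_pos σ p hp u x).le]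
  exact k_le σ p hp u x

theorem norm_k₁ (hp : ∀ x, 0 < p x) (u x : Esp n) :
    ‖k₁ σ p u x‖ = (σ ^ 2)⁻¹ * k σ p u x * ‖x - u‖ := by
  rw [k₁, norm_smul ((σ ^ 2)⁻¹ * k σ p u x) ((innerSL ℝ) (x - u)), innerSL_apply_norm,
    Real.norm_eq_abs]
  rcases le_or_gt 0 ((σ ^ 2)⁻¹ * k σ p u x) with h | h
  · rw [abs_of_nonneg h]
  · exfalso
    have := k_pos σ p hp u x
    nlinarith [sq_nonneg σ, inv_nonneg.mpr (sq_nonneg σ)]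

theorem norm_k₁_le (hσ : 0 < σ) (hp : ∀ x, 0 < p x) (u x : Esp n) :
    ‖k₁ σ p u x‖ ≤ ((σ ^ 2)⁻¹ * (1 + 2 * σ ^ 2)) * p x := by
  rw [norm_k₁ hp, k]
  have h1 : ‖x - u‖ * Real.exp (-‖u - x‖ ^ 2 / (2 * σ ^ 2)) ≤ 1 + 2 * σ ^ 2 := by
    rw [norm_sub_rev]
    exact norm_mul_exp_le σ hσ ‖u - x‖ (norm_nonneg _)
  have hs : (0:ℝ) < (σ ^ 2)⁻¹ := by positivity
  have hpx := (hp x).le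
  calc (σ ^ 2)⁻¹ * (Real.exp (-‖u - x‖ ^ 2 / (2 * σ ^ 2)) * p x) * ‖x - u‖
      = (σ ^ 2)⁻¹ * ((‖x - u‖ * Real.exp (-‖u - x‖ ^ 2 / (2 * σ ^ 2))) * p x) := by ring
    _ ≤ (σ ^ 2)⁻¹ * ((1 + 2 * σ ^ 2) * p x) := by
        apply mul_le_mul_of_nonneg_left _ hs.le
        exact mul_le_mul_of_nonneg_right h1 hpx
    _ = ((σ ^ 2)⁻¹ * (1 + 2 * σ ^ 2)) * p x := by ring

theorem k₁_aesm (σ : ℝ) (hint : Integrable p) (u : Esp n) :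
    AEStronglyMeasurable (k₁ σ p u) volume := by
  exact AEStronglyMeasurable.smul (f := fun x => (σ ^ 2)⁻¹ * k σ p u x)
    (g := fun x => innerSL ℝ (x - u)) ((k_aesm σ hint u).const_mul _)
    ((innerSL ℝ).continuous.comp (continuous_id.sub continuous_const)).aestronglyMeasurable

theorem k₁_int (hσ : 0 < σ) (hp : ∀ x, 0 < p x) (hint : Integrable p) (u : Esp n) :
    Integrable (k₁ σ p u) := by
  refine (hint.const_mul ((σ ^ 2)⁻¹ * (1 + 2 * σ ^ 2))).mono' (k₁_aesm σ hint u)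
    (Filter.Eventually.of_forall fun x => ?_)
  exact norm_k₁_le hσ hp u x

theorem k₂_apply (σ : ℝ) (p : Esp n → ℝ) (u x y z : Esp n) :
    k₂ σ p u x y z =
      (σ ^ 2)⁻¹ * ((σ ^ 2)⁻¹ * k σ p u x) *
        ((inner ℝ (x - u) y : ℝ) * (inner ℝ (x - u) z : ℝ))
      - (σ ^ 2)⁻¹ * k σ p u x * (inner ℝ y z : ℝ) := by
  simp only [k₂, innerB, ContinuousLinearMap.sub_apply, ContinuousLinearMap.smul_apply,
    ContinuousLinearMap.smulRight_apply, innerSL_apply_apply, smul_eq_mul]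
  rfl

theorem norm_k₂_le (hσ : 0 < σ) (hp : ∀ x, 0 < p x) (u x : Esp n) :
    ‖k₂ σ p u x‖ ≤ ((σ ^ 2)⁻¹ * (σ ^ 2)⁻¹ * (2 * σ ^ 2) + (σ ^ 2)⁻¹) * p x := by
  have hs : (0:ℝ) < (σ ^ 2)⁻¹ := by positivity
  have hk := k_pos σ p hp u x
  have hkle := k_le σ p hp u x
  have hpx := hp x
  have hC : (0:ℝ) ≤ ((σ ^ 2)⁻¹ * (σ ^ 2)⁻¹ * (2 * σ ^ 2) + (σ ^ 2)⁻¹) * p x := by positivity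
  refine ContinuousLinearMap.opNorm_le_bound _ hC fun y => ?_
  refine ContinuousLinearMap.opNorm_le_bound _ (mul_nonneg hC (norm_nonneg y)) fun z => ?_
  rw [Real.norm_eq_abs, k₂_apply]
  have ha := abs_real_inner_le_norm (x - u) y
  have hb := abs_real_inner_le_norm (x - u) z
  have hd := abs_real_inner_le_norm y z
  have hK2 : k σ p u x * (‖x - u‖ * ‖x - u‖) ≤ 2 * σ ^ 2 * p x := by
    rw [k]
    have h := sq_mul_exp_le σ hσ ‖u - x‖
    rw [norm_sub_rev x u]
    calc Real.exp (-‖u - x‖ ^ 2 / (2 * σ ^ 2)) * p x * (‖u - x‖ * ‖u - x‖)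
        = (‖u - x‖ ^ 2 * Real.exp (-‖u - x‖ ^ 2 / (2 * σ ^ 2))) * p x := by ring
      _ ≤ (2 * σ ^ 2) * p x := mul_le_mul_of_nonneg_right h hpx.le
      _ = 2 * σ ^ 2 * p x := by ring
  have hA : |(σ ^ 2)⁻¹ * ((σ ^ 2)⁻¹ * k σ p u x) *
      ((inner ℝ (x - u) y : ℝ) * (inner ℝ (x - u) z : ℝ))|
      ≤ (σ ^ 2)⁻¹ * (σ ^ 2)⁻¹ * (2 * σ ^ 2 * p x) * (‖y‖ * ‖z‖) := by
    rw [abs_mul, abs_of_nonneg (mul_nonneg hs.le (mul_nonneg hs.le hk.le)), abs_mul]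
    calc (σ ^ 2)⁻¹ * ((σ ^ 2)⁻¹ * k σ p u x) * (|(inner ℝ (x - u) y : ℝ)| * |(inner ℝ (x - u) z : ℝ)|)
        ≤ (σ ^ 2)⁻¹ * ((σ ^ 2)⁻¹ * k σ p u x) * ((‖x - u‖ * ‖y‖) * (‖x - u‖ * ‖z‖)) := by
          apply mul_le_mul_of_nonneg_left _ (mul_nonneg hs.le (mul_nonneg hs.le hk.le))
          exact mul_le_mul ha hb (abs_nonneg _) (by positivity)
      _ = (σ ^ 2)⁻¹ * (σ ^ 2)⁻¹ * (k σ p u x * (‖x - u‖ * ‖x - u‖)) * (‖y‖ * ‖z‖) := by ring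
      _ ≤ (σ ^ 2)⁻¹ * (σ ^ 2)⁻¹ * (2 * σ ^ 2 * p x) * (‖y‖ * ‖z‖) := by
          apply mul_le_mul_of_nonneg_right _ (by positivity)
          exact mul_le_mul_of_nonneg_left hK2 (by positivity)
  have hB : |(σ ^ 2)⁻¹ * k σ p u x * (inner ℝ y z : ℝ)| ≤ (σ ^ 2)⁻¹ * p x * (‖y‖ * ‖z‖) := by
    rw [abs_mul, abs_of_nonneg (mul_nonneg hs.le hk.le)]
    calc (σ ^ 2)⁻¹ * k σ p u x * |(inner ℝ y z : ℝ)|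
        ≤ (σ ^ 2)⁻¹ * k σ p u x * (‖y‖ * ‖z‖) :=
          mul_le_mul_of_nonneg_left hd (mul_nonneg hs.le hk.le)
      _ ≤ (σ ^ 2)⁻¹ * p x * (‖y‖ * ‖z‖) := by
          apply mul_le_mul_of_nonneg_right _ (by positivity)
          exact mul_le_mul_of_nonneg_left hkle hs.le
  refine le_trans (abs_sub _ _) ?_
  nlinarith [hA, hB]

theorem k₂_aesm (σ : ℝ) (hint : Integrable p) (u : Esp n) :
    AEStronglyMeasurable (k₂ σ p u) volume := by
  have hc : Continuous fun x : Esp n => innerSL ℝ (x - u) :=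
    (innerSL ℝ).continuous.comp (continuous_id.sub continuous_const)
  exact AEStronglyMeasurable.sub
    (f := fun x => ((σ ^ 2)⁻¹ * ((σ ^ 2)⁻¹ * k σ p u x)) •
        ((innerSL ℝ (x - u)).smulRight (innerSL ℝ (x - u))))
    (g := fun x => ((σ ^ 2)⁻¹ * k σ p u x) • innerB n)
    (AEStronglyMeasurable.smul (f := fun x => (σ ^ 2)⁻¹ * ((σ ^ 2)⁻¹ * k σ p u x))
      (g := fun x => (innerSL ℝ (x - u)).smulRight (innerSL ℝ (x - u)))
      (((k_aesm σ hint u).const_mul _).const_mul _)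
      (((ContinuousLinearMap.smulRightL ℝ (Esp n)
        (Esp n →L[ℝ] ℝ)).continuous.comp hc).clm_apply hc).aestronglyMeasurable)
    (AEStronglyMeasurable.smul (f := fun x => (σ ^ 2)⁻¹ * k σ p u x) (g := fun _ => innerB n)
      ((k_aesm σ hint u).const_mul _) aestronglyMeasurable_const)

theorem k₂_int (hσ : 0 < σ) (hp : ∀ x, 0 < p x) (hint : Integrable p) (u : Esp n) :
    @Integrable (Esp n →L[ℝ] Esp n →L[ℝ] ℝ) PseudoMetricSpace.toUniformSpace.toTopologicalSpace
      SeminormedAddGroup.toContinuousENorm _ _ (k₂ σ p u) volume := by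
  refine (hint.const_mul ((σ ^ 2)⁻¹ * (σ ^ 2)⁻¹ * (2 * σ ^ 2) + (σ ^ 2)⁻¹)).mono' (f := k₂ σ p u)
    (k₂_aesm σ hint u) (Filter.Eventually.of_forall fun x => ?_)
  exact norm_k₂_le hσ hp u x

theorem hasFDerivAt_k (σ : ℝ) (p : Esp n → ℝ) (u x : Esp n) :
    HasFDerivAt (fun u => k σ p u x) (k₁ σ p u x) u := by
  have h1 : HasFDerivAt (fun u : Esp n => ‖u - x‖ ^ 2)
      (2 • (innerSL ℝ (u - x))) u := by
    simpa using ((hasFDerivAt_id u).sub_const x).norm_sq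
  have heq : (fun u : Esp n => -‖u - x‖ ^ 2 / (2 * σ ^ 2))
      = fun u : Esp n => (-(2 * σ ^ 2)⁻¹) * ‖u - x‖ ^ 2 := by
    funext v; ring
  have h2 : HasFDerivAt (fun u : Esp n => -‖u - x‖ ^ 2 / (2 * σ ^ 2))
      ((-(2 * σ ^ 2)⁻¹) • (2 • (innerSL ℝ (u - x)))) u := by
    rw [heq]; exact h1.const_mul _
  have h4 := (h2.exp).mul_const (p x)
  refine h4.congr_fderiv ?_
  ext y
  simp only [k₁, k, ContinuousLinearMap.smul_apply, innerSL_apply_apply, smul_eq_mul,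
    ContinuousLinearMap.smulRight_apply, inner_sub_left, heq]
  ring

theorem hasFDerivAt_k₁ (σ : ℝ) (p : Esp n → ℝ) (u x : Esp n) :
    HasFDerivAt (fun u => k₁ σ p u x) (k₂ σ p u x) u := by
  have hc : HasFDerivAt (fun u : Esp n => (σ ^ 2)⁻¹ * k σ p u x)
      ((σ ^ 2)⁻¹ • k₁ σ p u x) u := (hasFDerivAt_k σ p u x).const_mul _
  have hf : HasFDerivAt (fun u : Esp n => innerSL ℝ (x - u)) (-(innerB n)) u := by
    have h0 : HasFDerivAt (fun u : Esp n => x - u)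
        (-(ContinuousLinearMap.id ℝ (Esp n))) u := (hasFDerivAt_id u).const_sub x
    have h1 := (innerB n).hasFDerivAt.comp u h0
    refine h1.congr_fderiv ?_
    ext y z
    simp [innerB]
  have h2 := hc.smul hf
  refine h2.congr_fderiv ?_
  ext y z
  simp only [k₂_apply, k₁, innerB, ContinuousLinearMap.add_apply,
    ContinuousLinearMap.smul_apply, ContinuousLinearMap.smulRight_apply,
    ContinuousLinearMap.neg_apply, innerSL_apply_apply, smul_eq_mul]
  erw [innerSL_apply_apply]
  ring

theorem hasFDerivAt_g (hσ : 0 < σ) (hp : ∀ x, 0 < p x) (hint : Integrable p) (u₀ : Esp n) :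
    HasFDerivAt (fun u => ∫ x, k σ p u x) (∫ x, k₁ σ p u₀ x) u₀ := by
  apply hasFDerivAt_integral_of_dominated_of_fderiv_le
    (bound := fun x => ((σ ^ 2)⁻¹ * (1 + 2 * σ ^ 2)) * p x) (s := Set.univ) Filter.univ_mem
  · exact Filter.Eventually.of_forall fun u => k_aesm σ hint u
  · exact k_int hp hint u₀
  · exact k₁_aesm σ hint u₀
  · exact Filter.Eventually.of_forall fun x u _ => norm_k₁_le hσ hp u x
  · exact hint.const_mul _
  · exact Filter.Eventually.of_forall fun x u _ => hasFDerivAt_k σ p u x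

theorem hasFDerivAt_g₁ (hσ : 0 < σ) (hp : ∀ x, 0 < p x) (hint : Integrable p) (u₀ : Esp n) :
    HasFDerivAt (fun u => ∫ x, k₁ σ p u x) (∫ x, k₂ σ p u₀ x) u₀ := by
  apply hasFDerivAt_integral_of_dominated_of_fderiv_le
    (bound := fun x => ((σ ^ 2)⁻¹ * (σ ^ 2)⁻¹ * (2 * σ ^ 2) + (σ ^ 2)⁻¹) * p x) (s := Set.univ) Filter.univ_mem
  · exact Filter.Eventually.of_forall fun u => k₁_aesm σ hint u
  · exact k₁_int hσ hp hint u₀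
  · exact k₂_aesm σ hint u₀
  · exact Filter.Eventually.of_forall fun x u _ => norm_k₂_le hσ hp u x
  · exact hint.const_mul _
  · exact Filter.Eventually.of_forall fun x u _ => hasFDerivAt_k₁ σ p u x

theorem g_pos (hp : ∀ x, 0 < p x) (hint : Integrable p) (u : Esp n) :
    0 < ∫ x, k σ p u x := by
  rw [integral_pos_iff_support_of_nonneg (fun x => (k_pos σ p hp u x).le) (k_int hp hint u)]
  have hsup : Function.support (k σ p u) = Set.univ :=
    Set.eq_univ_iff_forall.mpr fun x => (k_pos σ p hp u x).ne'
  rw [hsup]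
  exact IsOpen.measure_pos volume isOpen_univ Set.univ_nonempty

theorem ka_int (hσ : 0 < σ) (hp : ∀ x, 0 < p x) (hint : Integrable p) (u y : Esp n) :
    Integrable (fun x => k σ p u x * (inner ℝ (x - u) y : ℝ)) := by
  refine (hint.const_mul ((1 + 2 * σ ^ 2) * ‖y‖)).mono'
    ((k_aesm σ hint u).mul
      (((continuous_id.sub continuous_const).inner continuous_const).aestronglyMeasurable))
    (Filter.Eventually.of_forall fun x => ?_)
  rw [Real.norm_eq_abs, abs_mul, abs_of_nonneg (k_pos σ p hp u x).le]
  have h1 := abs_real_inner_le_norm (x - u) y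
  have h2 : k σ p u x * ‖x - u‖ ≤ (1 + 2 * σ ^ 2) * p x := by
    rw [k, norm_sub_rev x u]
    have := norm_mul_exp_le σ hσ ‖u - x‖ (norm_nonneg _)
    nlinarith [(hp x).le, norm_nonneg (u - x), Real.exp_pos (-‖u - x‖ ^ 2 / (2 * σ ^ 2))]
  nlinarith [(k_pos σ p hp u x).le, abs_nonneg (inner ℝ (x - u) y : ℝ), norm_nonneg (x - u),
    norm_nonneg y, mul_le_mul_of_nonneg_left h1 (k_pos σ p hp u x).le,
    mul_le_mul_of_nonneg_right h2 (norm_nonneg y)]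

theorem ka2_int (hσ : 0 < σ) (hp : ∀ x, 0 < p x) (hint : Integrable p) (u y : Esp n) :
    Integrable (fun x => k σ p u x * (inner ℝ (x - u) y : ℝ) ^ 2) := by
  refine (hint.const_mul ((2 * σ ^ 2) * ‖y‖ ^ 2)).mono'
    ((k_aesm σ hint u).mul
      ((((continuous_id.sub continuous_const).inner continuous_const).pow 2).aestronglyMeasurable))
    (Filter.Eventually.of_forall fun x => ?_)
  rw [Real.norm_eq_abs, abs_mul, abs_of_nonneg (k_pos σ p hp u x).le, abs_pow, sq_abs]
  have h1 : (inner ℝ (x - u) y : ℝ) ^ 2 ≤ ‖x - u‖ ^ 2 * ‖y‖ ^ 2 := by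
    have := abs_real_inner_le_norm (x - u) y
    nlinarith [abs_nonneg (inner ℝ (x - u) y : ℝ), norm_nonneg (x - u), norm_nonneg y,
      sq_abs (inner ℝ (x - u) y : ℝ)]
  have h2 : k σ p u x * ‖x - u‖ ^ 2 ≤ 2 * σ ^ 2 * p x := by
    rw [k, norm_sub_rev x u]
    have := sq_mul_exp_le σ hσ ‖u - x‖
    nlinarith [(hp x).le]
  nlinarith [(k_pos σ p hp u x).le, sq_nonneg (inner ℝ (x - u) y : ℝ), sq_nonneg ‖x - u‖,
    sq_nonneg ‖y‖, mul_le_mul_of_nonneg_left h1 (k_pos σ p hp u x).le,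
    mul_le_mul_of_nonneg_right h2 (sq_nonneg ‖y‖)]

theorem g₁_apply (hσ : 0 < σ) (hp : ∀ x, 0 < p x) (hint : Integrable p) (u y : Esp n) :
    (∫ x, k₁ σ p u x) y = (σ ^ 2)⁻¹ * ∫ x, k σ p u x * (inner ℝ (x - u) y : ℝ) := by
  rw [ContinuousLinearMap.integral_apply (k₁_int hσ hp hint u)]
  have h : ∀ x : Esp n, (k₁ σ p u x) y
      = (σ ^ 2)⁻¹ * (k σ p u x * (inner ℝ (x - u) y : ℝ)) := by
    intro x
    simp only [k₁, ContinuousLinearMap.smul_apply, innerSL_apply_apply, smul_eq_mul]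
    ring
  simp_rw [h]
  exact integral_const_mul _ _

theorem g₂_apply (hσ : 0 < σ) (hp : ∀ x, 0 < p x) (hint : Integrable p) (u y : Esp n) :
    ((∫ x, k₂ σ p u x) y) y
      = (σ ^ 2)⁻¹ * ((σ ^ 2)⁻¹ * ∫ x, k σ p u x * (inner ℝ (x - u) y : ℝ) ^ 2)
        - (σ ^ 2)⁻¹ * (∫ x, k σ p u x) * ‖y‖ ^ 2 := by
  rw [ContinuousLinearMap.integral_apply (k₂_int hσ hp hint u)]
  rw [ContinuousLinearMap.integral_apply ((k₂_int hσ hp hint u).apply_continuousLinearMap y)]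
  have h : ∀ x : Esp n, k₂ σ p u x y y
      = (σ ^ 2)⁻¹ * (σ ^ 2)⁻¹ * (k σ p u x * (inner ℝ (x - u) y : ℝ) ^ 2)
        - ((σ ^ 2)⁻¹ * (inner ℝ y y : ℝ)) * k σ p u x := by
    intro x
    rw [k₂_apply]
    ring
  simp_rw [h]
  rw [integral_sub ((ka2_int hσ hp hint u y).const_mul _) ((k_int hp hint u).const_mul _),
    integral_const_mul, integral_const_mul, real_inner_self_eq_norm_sq]
  ring

theorem variance_pos (hσ : 0 < σ) (hp : ∀ x, 0 < p x) (hint : Integrable p) (u y : Esp n)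
    (hy : y ≠ 0) :
    0 < (∫ x, k σ p u x) * (∫ x, k σ p u x * (inner ℝ (x - u) y : ℝ) ^ 2)
        - (∫ x, k σ p u x * (inner ℝ (x - u) y : ℝ)) ^ 2 := by
  have h0 : 0 < ∫ x, k σ p u x := g_pos hp hint u
  set I0 := ∫ x, k σ p u x with hI0
  set I1 := ∫ x, k σ p u x * (inner ℝ (x - u) y : ℝ) with hI1
  set I2 := ∫ x, k σ p u x * (inner ℝ (x - u) y : ℝ) ^ 2 with hI2
  set m := I1 / I0 with hm
  have hfeq : (fun x => k σ p u x * ((inner ℝ (x - u) y : ℝ) - m) ^ 2)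
      = fun x => (k σ p u x * (inner ℝ (x - u) y : ℝ) ^ 2
          - (2 * m) * (k σ p u x * (inner ℝ (x - u) y : ℝ))) + (m ^ 2) * k σ p u x := by
    funext x
    ring
  have hJint : Integrable (fun x => k σ p u x * ((inner ℝ (x - u) y : ℝ) - m) ^ 2) := by
    rw [hfeq]
    exact ((ka2_int hσ hp hint u y).sub ((ka_int hσ hp hint u y).const_mul _)).add
      ((k_int hp hint u).const_mul _)
  have hJval : ∫ x, k σ p u x * ((inner ℝ (x - u) y : ℝ) - m) ^ 2
      = I2 - (2 * m) * I1 + m ^ 2 * I0 := by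
    have hint1 : Integrable (fun x => k σ p u x * (inner ℝ (x - u) y : ℝ) ^ 2
        - (2 * m) * (k σ p u x * (inner ℝ (x - u) y : ℝ))) :=
      (ka2_int hσ hp hint u y).sub ((ka_int hσ hp hint u y).const_mul _)
    have hint2 : Integrable (fun x => (m ^ 2) * k σ p u x) := (k_int hp hint u).const_mul _
    rw [hfeq, integral_add hint1 hint2,
      integral_sub (ka2_int hσ hp hint u y) ((ka_int hσ hp hint u y).const_mul _),
      integral_const_mul, integral_const_mul]
  have hacont : Continuous fun x : Esp n => (inner ℝ (x - u) y : ℝ) :=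
    (continuous_id.sub continuous_const).inner continuous_const
  have hJpos : 0 < ∫ x, k σ p u x * ((inner ℝ (x - u) y : ℝ) - m) ^ 2 := by
    rw [integral_pos_iff_support_of_nonneg
      (fun x => mul_nonneg (k_pos σ p hp u x).le (sq_nonneg _)) hJint]
    have hyn : (‖y‖ : ℝ) ^ 2 ≠ 0 := pow_ne_zero 2 (norm_ne_zero_iff.mpr hy)
    have hx₀ : (inner ℝ ((u + ((m + 1) / ‖y‖ ^ 2) • y) - u) y : ℝ) = m + 1 := by
      rw [add_sub_cancel_left, real_inner_smul_left, real_inner_self_eq_norm_sq]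
      field_simp
    have hopen : IsOpen {x : Esp n | (inner ℝ (x - u) y : ℝ) ≠ m} :=
      IsOpen.preimage hacont isOpen_ne
    have hne : ({x : Esp n | (inner ℝ (x - u) y : ℝ) ≠ m} : Set (Esp n)).Nonempty := by
      refine ⟨u + ((m + 1) / ‖y‖ ^ 2) • y, ?_⟩
      rw [Set.mem_setOf_eq, hx₀]
      intro hcon
      linarith [hcon]
    refine lt_of_lt_of_le (IsOpen.measure_pos volume hopen hne) (measure_mono ?_)
    intro x hx
    rw [Set.mem_setOf_eq] at hx
    have h1 : ((inner ℝ (x - u) y : ℝ) - m) ^ 2 ≠ 0 := pow_ne_zero 2 (sub_ne_zero.mpr hx)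
    have h2 : 0 < ((inner ℝ (x - u) y : ℝ) - m) ^ 2 := lt_of_le_of_ne (sq_nonneg _) (Ne.symm h1)
    exact (mul_pos (k_pos σ p hp u x) h2).ne'
  have key : I0 * (∫ x, k σ p u x * ((inner ℝ (x - u) y : ℝ) - m) ^ 2) = I0 * I2 - I1 ^ 2 := by
    rw [hJval, hm]
    field_simp
    ring
  nlinarith [mul_pos h0 hJpos, key]

end meas
end Stmt0Aux


open Stmt0Aux in
/-- Positive definiteness of the Jacobian of the MMSE denoiser
`D_σ(u) = u - σ² ∇h_σ(u)`, where `h_σ = -log p_u` and `p_u = p_x * φ_σ`. -/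
theorem stmt0 (n : ℕ) (σ : ℝ) (hσpos : 0 < σ)
    (p_x : EuclideanSpace ℝ (Fin n) → ℝ)
    (hnonneg : ∀ x, 0 < p_x x)                 -- non-degenerate (full support)
    (hint : Integrable p_x)
    (hprob : ∫ x, p_x x = 1)
    (p_u : EuclideanSpace ℝ (Fin n) → ℝ)
    (hpu : ∀ u, p_u u =
      ∫ x, (2 * Real.pi * σ ^ 2) ^ (-(n : ℝ) / 2) *
            Real.exp (-‖u - x‖ ^ 2 / (2 * σ ^ 2)) * p_x x)
    (hs : EuclideanSpace ℝ (Fin n) → ℝ)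
    (hhs : ∀ u, hs u = -Real.log (p_u u))
    (D : EuclideanSpace ℝ (Fin n) → EuclideanSpace ℝ (Fin n))
    (hD : ∀ u, D u = u - σ ^ 2 • gradient hs u) :
    ∀ u, ∀ y : EuclideanSpace ℝ (Fin n), y ≠ 0 →
      0 < (inner ℝ y (fderiv ℝ D u y) : ℝ) := by
  intro u y hy
  have hσ2 : (0:ℝ) < σ ^ 2 := by positivity
  set c : ℝ := (2 * Real.pi * σ ^ 2) ^ (-(n : ℝ) / 2) with hc
  have hcpos : 0 < c := Real.rpow_pos_of_pos (by positivity) _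
  have hpu' : ∀ v, p_u v = c * ∫ x, k σ p_x v x := by
    intro v
    rw [hpu v]
    simp_rw [mul_assoc]
    exact integral_const_mul _ _
  have hgpos : ∀ v, 0 < ∫ x, k σ p_x v x := fun v => g_pos hnonneg hint v
  have hgd : ∀ v, HasFDerivAt (fun w => ∫ x, k σ p_x w x) (∫ x, k₁ σ p_x v x) v :=
    fun v => hasFDerivAt_g hσpos hnonneg hint v
  have hg1d : ∀ v, HasFDerivAt (fun w => ∫ x, k₁ σ p_x w x) (∫ x, k₂ σ p_x v x) v :=
    fun v => hasFDerivAt_g₁ hσpos hnonneg hint v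
  -- derivative of hs
  have hsd : ∀ v, HasFDerivAt hs
      ((-(∫ x, k σ p_x v x)⁻¹) • (∫ x, k₁ σ p_x v x)) v := by
    intro v
    have hsfun : hs = fun w => -Real.log (c * ∫ x, k σ p_x w x) := by
      funext w; rw [hhs w, hpu' w]
    rw [hsfun]
    have hlog := (((hgd v).const_mul c).log
      (ne_of_gt (mul_pos hcpos (hgpos v)))).neg
    refine hlog.congr_fderiv ?_
    ext z
    simp only [ContinuousLinearMap.neg_apply, ContinuousLinearMap.smul_apply, smul_eq_mul,
      neg_smul]
    field_simp
  -- the Riesz map as a continuous linear map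
  set Tclm : (EuclideanSpace ℝ (Fin n) →L[ℝ] ℝ) →L[ℝ] EuclideanSpace ℝ (Fin n) :=
    ((InnerProductSpace.toDual ℝ
      (EuclideanSpace ℝ (Fin n))).symm.toContinuousLinearEquiv.toContinuousLinearMap) with hTdef
  have hTy : ∀ ℓ : EuclideanSpace ℝ (Fin n) →L[ℝ] ℝ, (inner ℝ y (Tclm ℓ) : ℝ) = ℓ y := by
    intro ℓ
    rw [real_inner_comm]
    exact InnerProductSpace.toDual_symm_apply
  have hTsmul : ∀ (a : ℝ) (ℓ : EuclideanSpace ℝ (Fin n) →L[ℝ] ℝ),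
      Tclm (a • ℓ) = a • Tclm ℓ := fun a ℓ => map_smul Tclm a ℓ
  have hgrad : ∀ v, gradient hs v
      = Tclm ((-(∫ x, k σ p_x v x)⁻¹) • (∫ x, k₁ σ p_x v x)) :=
    fun v => (hasFDerivAt_iff_hasGradientAt.mp (hsd v)).gradient
  have hDfun : D = fun v => v + (σ ^ 2 * (∫ x, k σ p_x v x)⁻¹) • Tclm (∫ x, k₁ σ p_x v x) := by
    funext v
    rw [hD v, hgrad v, hTsmul, smul_smul, mul_neg, neg_smul, sub_neg_eq_add]
  -- differentiate D
  have hαd : HasFDerivAt (fun v => σ ^ 2 * (∫ x, k σ p_x v x)⁻¹)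
      ((σ ^ 2) • ((-((∫ x, k σ p_x u x) ^ 2)⁻¹) • (∫ x, k₁ σ p_x u x))) u :=
    ((hasDerivAt_inv (hgpos u).ne').comp_hasFDerivAt u (hgd u)).const_mul _
  have hβd : HasFDerivAt (fun v => Tclm (∫ x, k₁ σ p_x v x))
      (Tclm.comp (∫ x, k₂ σ p_x u x)) u :=
    Tclm.hasFDerivAt.comp u (hg1d u)
  have hDd : HasFDerivAt D
      (ContinuousLinearMap.id ℝ (EuclideanSpace ℝ (Fin n)) +
        ((σ ^ 2 * (∫ x, k σ p_x u x)⁻¹) • (Tclm.comp (∫ x, k₂ σ p_x u x)) +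
          ((σ ^ 2) • ((-((∫ x, k σ p_x u x) ^ 2)⁻¹) •
            (∫ x, k₁ σ p_x u x))).smulRight (Tclm (∫ x, k₁ σ p_x u x)))) u := by
    rw [hDfun]
    exact (hasFDerivAt_id u).add (hαd.smul hβd)
  rw [hDd.fderiv]
  -- compute the inner product
  have hI0 : (0:ℝ) < ∫ x, k σ p_x u x := hgpos u
  have hG1y : (∫ x, k₁ σ p_x u x) y
      = (σ ^ 2)⁻¹ * ∫ x, k σ p_x u x * (inner ℝ (x - u) y : ℝ) :=
    g₁_apply hσpos hnonneg hint u y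
  have hG2yy : ((∫ x, k₂ σ p_x u x) y) y
      = (σ ^ 2)⁻¹ * ((σ ^ 2)⁻¹ * ∫ x, k σ p_x u x * (inner ℝ (x - u) y : ℝ) ^ 2)
        - (σ ^ 2)⁻¹ * (∫ x, k σ p_x u x) * ‖y‖ ^ 2 :=
    g₂_apply hσpos hnonneg hint u y
  have hvar := variance_pos hσpos hnonneg hint u y hy
  set I0 := ∫ x, k σ p_x u x with hI0def
  set I1 := ∫ x, k σ p_x u x * (inner ℝ (x - u) y : ℝ) with hI1def
  set I2 := ∫ x, k σ p_x u x * (inner ℝ (x - u) y : ℝ) ^ 2 with hI2def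
  have happ : ((ContinuousLinearMap.id ℝ (EuclideanSpace ℝ (Fin n)) +
        ((σ ^ 2 * I0⁻¹) • (Tclm.comp (∫ x, k₂ σ p_x u x)) +
          ((σ ^ 2) • ((-(I0 ^ 2)⁻¹) •
            (∫ x, k₁ σ p_x u x))).smulRight (Tclm (∫ x, k₁ σ p_x u x)))) y)
      = y + ((σ ^ 2 * I0⁻¹) • Tclm ((∫ x, k₂ σ p_x u x) y)
          + (σ ^ 2 * (-(I0 ^ 2)⁻¹ * ((∫ x, k₁ σ p_x u x) y))) •
              Tclm (∫ x, k₁ σ p_x u x)) := by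
    simp only [ContinuousLinearMap.add_apply, ContinuousLinearMap.coe_id', id_eq,
      ContinuousLinearMap.smul_apply, ContinuousLinearMap.coe_comp', Function.comp_apply,
      ContinuousLinearMap.smulRight_apply, smul_eq_mul]
  rw [happ]
  rw [inner_add_right, inner_add_right, real_inner_smul_right, real_inner_smul_right,
    real_inner_self_eq_norm_sq, hTy, hTy, hG1y, hG2yy]
  have hfinal : ‖y‖ ^ 2 + (σ ^ 2 * I0⁻¹ *
        ((σ ^ 2)⁻¹ * ((σ ^ 2)⁻¹ * I2) - (σ ^ 2)⁻¹ * I0 * ‖y‖ ^ 2)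
      + σ ^ 2 * (-(I0 ^ 2)⁻¹ * ((σ ^ 2)⁻¹ * I1)) * ((σ ^ 2)⁻¹ * I1))
      = (σ ^ 2)⁻¹ * (I0⁻¹) ^ 2 * (I0 * I2 - I1 ^ 2) := by
    field_simp
    ring
  rw [hfinal]
  have h1 : (0:ℝ) < (σ ^ 2)⁻¹ * (I0⁻¹) ^ 2 := by positivity
  exact mul_pos h1 hvar
end
end

section
/- Tweedie's formula: if p_u(u) = ∫ φ_σ(u - x) p_x(x) dx with φ_σ the Gaussian density of variance σ² on ℝⁿ, and D_σ(u) = ∫ x · φ_σ(u-x) p_x(x) dx / p_u(u) is the posterior mean, then D_σ(u) = u + σ² ∇ log p_u(u) for every u with p_u(u) > 0. -/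
open MeasureTheory Real Pointwise

set_option maxHeartbeats 2000000
set_option synthInstance.maxHeartbeats 400000

/-- Tweedie's formula: the posterior mean denoiser satisfies
`D_σ(u) = u + σ² ∇ log p_u(u)` wherever `p_u(u) > 0`. -/
theorem stmt1 (n : ℕ) (σ : ℝ) (hσpos : 0 < σ)
    (p_x : EuclideanSpace ℝ (Fin n) → ℝ)
    (hnonneg : ∀ x, 0 ≤ p_x x)
    (hint : Integrable p_x)
    (hprob : ∫ x, p_x x = 1)
    (hsupp : HasCompactSupport p_x)            -- justifies differentiation under ∫
    (φσ : EuclideanSpace ℝ (Fin n) → ℝ)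
    (hφσ : ∀ x, φσ x = (2 * Real.pi * σ ^ 2) ^ (-(n : ℝ) / 2) *
            Real.exp (-‖x‖ ^ 2 / (2 * σ ^ 2)))
    (p_u : EuclideanSpace ℝ (Fin n) → ℝ)
    (hpu : ∀ u, p_u u = ∫ x, φσ (u - x) * p_x x)
    (hpos : ∀ u, 0 < p_u u)
    (D : EuclideanSpace ℝ (Fin n) → EuclideanSpace ℝ (Fin n))
    (hD : ∀ u, D u = (p_u u)⁻¹ • ∫ x, (φσ (u - x) * p_x x) • x) :
    ∀ u, 0 < p_u u →
      D u = u + σ ^ 2 • gradient (fun v => Real.log (p_u v)) u := by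
  intro u hu
  have hσ2 : (σ : ℝ) ^ 2 ≠ 0 := by positivity
  set c : ℝ := (2 * Real.pi * σ ^ 2) ^ (-(n : ℝ) / 2) with hc
  have hcpos : 0 < c := Real.rpow_pos_of_pos (by positivity) _
  have hφeq : φσ = fun y => c * Real.exp (-‖y‖ ^ 2 / (2 * σ ^ 2)) := funext hφσ
  have hφcont : Continuous φσ := by
    rw [hφeq]; fun_prop
  have hφbdd : ∀ y, |φσ y| ≤ c := by
    intro y
    rw [hφσ, abs_of_pos (by positivity)]
    have hle : Real.exp (-‖y‖ ^ 2 / (2 * σ ^ 2)) ≤ 1 := by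
      rw [Real.exp_le_one_iff]
      apply div_nonpos_of_nonpos_of_nonneg
      · exact neg_nonpos.mpr (by positivity)
      · positivity
    nlinarith [Real.exp_pos (-‖y‖ ^ 2 / (2 * σ ^ 2))]
  -- derivative of the Gaussian
  have hφ' : ∀ y : EuclideanSpace ℝ (Fin n), HasFDerivAt φσ ((-(σ ^ 2)⁻¹ * φσ y) • (innerSL ℝ y)) y := by
    intro y
    have h1 : HasFDerivAt (fun z : EuclideanSpace ℝ (Fin n) => ‖z‖ ^ 2) (2 • (innerSL ℝ y)) y :=
      (hasStrictFDerivAt_norm_sq y).hasFDerivAt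
    have h2 : HasFDerivAt (fun z : EuclideanSpace ℝ (Fin n) => -‖z‖ ^ 2 / (2 * σ ^ 2))
        ((-(2 * σ ^ 2)⁻¹) • (2 • (innerSL ℝ y))) y := by
      have := h1.const_mul (-(2 * σ ^ 2)⁻¹)
      refine this.congr_of_eventuallyEq (Filter.Eventually.of_forall fun z => ?_)
      ring
    have h3 := (h2.exp).const_mul c
    rw [hφeq]
    refine h3.congr_fderiv ?_
    ext v
    simp only [ContinuousLinearMap.smul_apply, innerSL_apply_apply, smul_eq_mul,
      ContinuousLinearMap.coe_smul', Pi.smul_apply, nsmul_eq_mul]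
    field_simp
    ring
  -- derivative of the integrand in the parameter
  have hF' : ∀ (x : EuclideanSpace ℝ (Fin n)) (v : EuclideanSpace ℝ (Fin n)), HasFDerivAt (fun w => φσ (w - x) * p_x x)
      ((p_x x * (-(σ ^ 2)⁻¹ * φσ (v - x))) • (innerSL ℝ (v - x))) v := by
    intro x v
    have hsub : HasFDerivAt (fun w : EuclideanSpace ℝ (Fin n) => w - x) (ContinuousLinearMap.id ℝ (EuclideanSpace ℝ (Fin n))) v :=
      (hasFDerivAt_id v).sub_const x
    have := ((hφ' (v - x)).comp v hsub).mul_const (p_x x)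
    refine this.congr_fderiv ?_
    ext w
    simp only [ContinuousLinearMap.smul_apply, innerSL_apply_apply, smul_eq_mul,
      ContinuousLinearMap.coe_comp', Function.comp_apply, ContinuousLinearMap.coe_id', id_eq]
    ring
  -- measurability facts
  have hmeasφ : ∀ v : EuclideanSpace ℝ (Fin n), AEStronglyMeasurable (fun x => φσ (v - x)) volume := fun v =>
    (hφcont.comp (continuous_const.sub continuous_id)).aestronglyMeasurable
  have hInt1 : ∀ v : EuclideanSpace ℝ (Fin n), Integrable (fun x => φσ (v - x) * p_x x) := fun v =>
    hint.bdd_mul (hmeasφ v) (Filter.Eventually.of_forall fun x => by simpa [Real.norm_eq_abs] using hφbdd (v - x))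
  -- integrability of vector-valued integrands
  have hIntVec : ∀ b : EuclideanSpace ℝ (Fin n) → EuclideanSpace ℝ (Fin n), Continuous b →
      Integrable (fun x => (φσ (u - x) * p_x x) • b x) := by
    intro b hb
    obtain ⟨M, hM⟩ := hsupp.isCompact.exists_bound_of_continuousOn hb.continuousOn
    refine Integrable.mono' ((hint.norm.const_mul (c * M))) ?_ ?_
    · exact ((hmeasφ u).mul hint.aestronglyMeasurable).smul hb.aestronglyMeasurable
    · refine Filter.Eventually.of_forall fun x => ?_
      by_cases hx : x ∈ tsupport p_x
      · have h1 := hφbdd (u - x)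
        have h2 := hM x hx
        rw [norm_smul, Real.norm_eq_abs, abs_mul]
        have hb0 : (0:ℝ) ≤ ‖b x‖ := norm_nonneg _
        have hp0 : (0:ℝ) ≤ |p_x x| := abs_nonneg _
        have hφ0 : (0:ℝ) ≤ |φσ (u - x)| := abs_nonneg _
        have h3 : |φσ (u - x)| * ‖b x‖ ≤ c * M := mul_le_mul h1 h2 hb0 (le_of_lt hcpos)
        calc |φσ (u - x)| * |p_x x| * ‖b x‖ ≤ c * |p_x x| * M := by nlinarith
          _ = c * M * ‖p_x x‖ := by rw [Real.norm_eq_abs]; ring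
      · have hz : p_x x = 0 := image_eq_zero_of_notMem_tsupport hx
        simp [hz]
  -- the gradient integrand
  set g : EuclideanSpace ℝ (Fin n) → EuclideanSpace ℝ (Fin n) := fun x => (p_x x * (-(σ ^ 2)⁻¹ * φσ (u - x))) • (u - x) with hg
  have hg_eq : g = fun x => (φσ (u - x) * p_x x) • ((-(σ ^ 2)⁻¹) • (u - x)) := by
    funext x
    rw [hg, smul_smul]
    congr 1
    ring
  have hg_int : Integrable g := by
    rw [hg_eq]
    exact hIntVec (fun x => (-(σ ^ 2)⁻¹) • (u - x)) (by fun_prop)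
  -- bound on the derivative near u
  obtain ⟨C, hC⟩ : ∃ C, ∀ y ∈ Metric.closedBall u 1 + -tsupport p_x,
      ‖(-(σ ^ 2)⁻¹ * φσ y) • (innerSL ℝ (E := EuclideanSpace ℝ (Fin n)) y)‖ ≤ C := by
    have hK : IsCompact (Metric.closedBall u 1 + -tsupport p_x) :=
      (isCompact_closedBall u 1).add hsupp.isCompact.neg
    exact hK.exists_bound_of_continuousOn
      (((continuous_const.mul hφcont).smul (innerSL ℝ).continuous).continuousOn)
  -- differentiation under the integral sign
  have key : HasFDerivAt (fun v => ∫ x, φσ (v - x) * p_x x)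
      (∫ x, (p_x x * (-(σ ^ 2)⁻¹ * φσ (u - x))) • (innerSL ℝ (u - x))) u := by
    apply hasFDerivAt_integral_of_dominated_of_fderiv_le
      (F' := fun v x => (p_x x * (-(σ ^ 2)⁻¹ * φσ (v - x))) • (innerSL ℝ (v - x)))
      (bound := fun x => C * |p_x x|) (Metric.ball_mem_nhds u one_pos)
    · exact Filter.Eventually.of_forall fun v =>
        (hmeasφ v).mul hint.aestronglyMeasurable
    · exact hInt1 u
    · refine AEStronglyMeasurable.smul (f := fun x => p_x x * (-(σ ^ 2)⁻¹ * φσ (u - x)))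
        (g := fun x => innerSL ℝ (E := EuclideanSpace ℝ (Fin n)) (u - x)) ?_ ?_
      · exact (hint.aestronglyMeasurable.mul
          ((continuous_const.mul (hφcont.comp (continuous_const.sub continuous_id))).aestronglyMeasurable))
      · exact ((innerSL ℝ).continuous.comp (continuous_const.sub continuous_id)).aestronglyMeasurable
    · refine Filter.Eventually.of_forall fun x v hv => ?_
      by_cases hx : x ∈ tsupport p_x
      · have hmem : v - x ∈ Metric.closedBall u 1 + -tsupport p_x := by
          rw [sub_eq_add_neg]
          exact Set.add_mem_add (Metric.ball_subset_closedBall hv) (Set.neg_mem_neg.mpr hx)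
        have h1 := hC _ hmem
        rw [show (p_x x * (-(σ ^ 2)⁻¹ * φσ (v - x))) • (innerSL ℝ (v - x))
            = p_x x • ((-(σ ^ 2)⁻¹ * φσ (v - x)) • (innerSL ℝ (v - x))) by rw [smul_smul]]
        have hstep : ‖p_x x • ((-(σ ^ 2)⁻¹ * φσ (v - x)) • (innerSL ℝ (E := EuclideanSpace ℝ (Fin n)) (v - x)))‖
            ≤ |p_x x| * ‖(-(σ ^ 2)⁻¹ * φσ (v - x)) • (innerSL ℝ (E := EuclideanSpace ℝ (Fin n)) (v - x))‖ :=
          by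
            have hns := norm_smul_le (p_x x)
              ((-(σ ^ 2)⁻¹ * φσ (v - x)) • (innerSL ℝ (E := EuclideanSpace ℝ (Fin n)) (v - x)))
            rwa [Real.norm_eq_abs] at hns
        have := abs_nonneg (p_x x)
        calc ‖p_x x • ((-(σ ^ 2)⁻¹ * φσ (v - x)) • (innerSL ℝ (E := EuclideanSpace ℝ (Fin n)) (v - x)))‖
            ≤ |p_x x| * C := hstep.trans (mul_le_mul_of_nonneg_left h1 this)
          _ = C * |p_x x| := by ring
      · have : p_x x = 0 := image_eq_zero_of_notMem_tsupport hx
        simp [this]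
    · exact hint.abs.const_mul C
    · exact Filter.Eventually.of_forall fun x v _ => hF' x v
  -- identify the derivative with the inner product against `G`
  set G : EuclideanSpace ℝ (Fin n) := ∫ x, g x with hG
  have hderiv_eq : (∫ x, (p_x x * (-(σ ^ 2)⁻¹ * φσ (u - x))) • (innerSL ℝ (u - x)))
      = innerSL ℝ G := by
    have h1 : (fun x => (p_x x * (-(σ ^ 2)⁻¹ * φσ (u - x))) • (innerSL ℝ (E := EuclideanSpace ℝ (Fin n)) (u - x)))
        = fun x => innerSL ℝ (g x) := by
      funext x
      rw [hg, _root_.map_smul]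
    rw [h1, ContinuousLinearMap.integral_comp_comm (innerSL ℝ) hg_int]
  have hp_u_eq : p_u = fun v => ∫ x, φσ (v - x) * p_x x := funext hpu
  have hgradp : HasFDerivAt p_u (innerSL ℝ G) u := by
    rw [hp_u_eq]
    rw [← hderiv_eq]
    exact key
  have hPu : p_u u ≠ 0 := ne_of_gt hu
  have hlog : HasFDerivAt (fun v => Real.log (p_u v)) ((p_u u)⁻¹ • innerSL ℝ G) u :=
    hgradp.log hPu
  have hgradlog : gradient (fun v => Real.log (p_u v)) u = (p_u u)⁻¹ • G := by
    apply HasGradientAt.gradient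
    rw [hasGradientAt_iff_hasFDerivAt]
    refine hlog.congr_fderiv ?_
    ext v
    simp [InnerProductSpace.toDual_apply_apply, real_inner_smul_left]
  rw [hgradlog, hD u]
  -- final algebra
  have hG_eq : G = (-(σ ^ 2)⁻¹) • ((p_u u) • u - ∫ x, (φσ (u - x) * p_x x) • x) := by
    rw [hG, hg_eq]
    have h1 : (fun x => (φσ (u - x) * p_x x) • ((-(σ ^ 2)⁻¹) • (u - x)))
        = fun x => (-(σ ^ 2)⁻¹) • ((φσ (u - x) * p_x x) • (u - x)) := by
      funext x; rw [smul_comm]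
    rw [h1, integral_smul]
    congr 1
    have h2 : (fun x => (φσ (u - x) * p_x x) • (u - x))
        = fun x => (φσ (u - x) * p_x x) • u - (φσ (u - x) * p_x x) • x := by
      funext x; rw [smul_sub]
    have hI2 : Integrable (fun x => (φσ (u - x) * p_x x) • x) := by
      simpa using hIntVec (fun x => x) continuous_id
    rw [h2, integral_sub ((hInt1 u).smul_const u) hI2, integral_smul_const, ← hpu u]
  rw [hG_eq]
  rw [smul_comm (σ ^ 2) ((p_u u)⁻¹), smul_smul (σ ^ 2), mul_neg, mul_inv_cancel₀ hσ2]
  rw [neg_smul, one_smul, smul_neg, smul_sub, smul_smul (p_u u)⁻¹ (p_u u),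
    inv_mul_cancel₀ hPu, one_smul]
  abel
end

section
/- Let D: ℝⁿ → ℝⁿ be C¹ with everywhere positive definite Jacobian, and fix u ∈ ℝⁿ. Define φ(y) = (1/2)‖D(y) - u‖² + γ h(D(y)) where h is chosen so that φ(y) = (1/2)‖D(y)-u‖² - (σ⁴/2)‖∇h_σ(y)‖² + σ² h_σ(y) and D(y) = y - σ²∇h_σ(y). Then ∇φ(y) = (JD(y))(y - u), and y* = u is the unique stationary point and unique global minimizer of φ. -/
open RealInnerProductSpace InnerProductSpace



/-- `y* = u` is the unique stationary point and unique global minimizer of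
`φ(y) = ½‖D(y)-u‖² - (σ⁴/2)‖∇h_σ(y)‖² + σ² h_σ(y)`, with `∇φ(y) = JD(y)(y-u)`. -/
theorem stmt3 (n : ℕ) (σ γ : ℝ) (hσpos : 0 < σ) (hγ : 0 < γ)
    (hsfun : EuclideanSpace ℝ (Fin n) → ℝ)
    (hC2 : ContDiff ℝ 2 hsfun)
    (D : EuclideanSpace ℝ (Fin n) → EuclideanSpace ℝ (Fin n))
    (hD : ∀ y, D y = y - σ ^ 2 • gradient hsfun y)
    (hPD : ∀ y, ∀ w : EuclideanSpace ℝ (Fin n), w ≠ 0 →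
      0 < (inner ℝ w (fderiv ℝ D y w) : ℝ))
    (u : EuclideanSpace ℝ (Fin n))
    (φ : EuclideanSpace ℝ (Fin n) → ℝ)
    (hφ : ∀ y, φ y = (1 / 2) * ‖D y - u‖ ^ 2
        - (σ ^ 4 / 2) * ‖gradient hsfun y‖ ^ 2 + σ ^ 2 * hsfun y) :
    (∀ y, gradient φ y = fderiv ℝ D y (y - u)) ∧
    (∀ y, gradient φ y = 0 ↔ y = u) ∧
    (∀ y, y ≠ u → φ u < φ y) := by
  have hdiff : Differentiable ℝ hsfun := hC2.differentiable (by norm_num)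
  set g : EuclideanSpace ℝ (Fin n) → EuclideanSpace ℝ (Fin n) := gradient hsfun with hg
  have hgeq : g = (toDual ℝ _).symm ∘ (fderiv ℝ hsfun) := rfl
  have hgC1 : ContDiff ℝ 1 g := by
    rw [hgeq]
    exact (toDual ℝ _).symm.contDiff.comp (hC2.fderiv_right (by norm_num))
  have hgdiff : Differentiable ℝ g := hgC1.differentiable (by norm_num)
  have hinner_g : ∀ y v, ⟪g y, v⟫ = fderiv ℝ hsfun y v := fun y v => toDual_symm_apply
  have hinner_g' : ∀ y v w, ⟪fderiv ℝ g y v, w⟫ = fderiv ℝ (fderiv ℝ hsfun) y v w := by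
    intro y v w
    rw [hgeq, (toDual ℝ _).symm.comp_fderiv]
    exact toDual_symm_apply
  have hsymm : ∀ y v w, ⟪fderiv ℝ g y v, w⟫ = ⟪fderiv ℝ g y w, v⟫ := by
    intro y v w
    rw [hinner_g', hinner_g']
    exact ((hC2.contDiffAt (x := y)).isSymmSndFDerivAt (by norm_num)).eq v w
  have hDfun : D = fun y => y - σ ^ 2 • g y := funext hD
  subst hDfun
  have hDd : ∀ y, HasFDerivAt (fun y => y - σ ^ 2 • g y)
      (ContinuousLinearMap.id ℝ _ - σ ^ 2 • fderiv ℝ g y) y := by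
    intro y
    exact (hasFDerivAt_id y).sub (((hgdiff y).hasFDerivAt).const_smul (σ ^ 2))
  have hfD : ∀ y, fderiv ℝ (fun y => y - σ ^ 2 • g y) y
      = ContinuousLinearMap.id ℝ _ - σ ^ 2 • fderiv ℝ g y := fun y => (hDd y).fderiv
  have hφfd : ∀ y, HasFDerivAt φ
      (toDual ℝ _ (fderiv ℝ (fun y => y - σ ^ 2 • g y) y (y - u))) y := by
    intro y
    have hφ' : φ = fun z => (1 / 2) * ‖(z - σ ^ 2 • g z) - u‖ ^ 2
        - (σ ^ 4 / 2) * ‖g z‖ ^ 2 + σ ^ 2 * hsfun z := funext hφ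
    rw [hφ']
    have h1 := ((hDd y).sub_const u).norm_sq
    have h2 := ((hgdiff y).hasFDerivAt).norm_sq
    have h3 := (hdiff y).hasFDerivAt
    have htot := ((h1.const_mul (1/2 : ℝ)).sub (h2.const_mul (σ^4/2 : ℝ))).add (h3.const_mul (σ^2 : ℝ))
    refine htot.congr_fderiv (Eq.symm ?_)
    apply ContinuousLinearMap.ext
    intro v
    have hsy : ⟪fderiv ℝ g y (y - u), v⟫ = ⟪y - u, fderiv ℝ g y v⟫ := by
      rw [hsymm, real_inner_comm]
    simp only [hfD, toDual_apply_apply, ContinuousLinearMap.coe_sub', ContinuousLinearMap.coe_smul',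
      Pi.sub_apply, Pi.smul_apply, ContinuousLinearMap.coe_id', id_eq,
      ContinuousLinearMap.add_apply, ContinuousLinearMap.coe_comp',
      ContinuousLinearMap.smul_apply, Function.comp_apply, innerSL_apply_apply,
      ContinuousLinearMap.coe_mul, smul_eq_mul, two_smul]
    have hsy2 : ⟪(fderiv ℝ g y) (y - u), v⟫ = ⟪y, (fderiv ℝ g y) v⟫ - ⟪u, (fderiv ℝ g y) v⟫ := by
      rw [hsy, inner_sub_left]
    simp only [inner_sub_left, inner_sub_right, real_inner_smul_left, real_inner_smul_right,
      hsy2, ← hinner_g y v]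
    ring
  have hgradφ : ∀ y, gradient φ y = fderiv ℝ (fun y => y - σ ^ 2 • g y) y (y - u) := by
    intro y
    exact (hasGradientAt_iff_hasFDerivAt.mpr (hφfd y)).gradient
  refine ⟨hgradφ, ?_, ?_⟩
  · intro y
    constructor
    · intro h
      by_contra hne
      have hw : y - u ≠ 0 := sub_ne_zero.2 hne
      have := hPD y (y - u) hw
      rw [hgradφ] at h
      rw [h, inner_zero_right] at this
      exact lt_irrefl 0 this
    · intro h
      subst h
      rw [hgradφ]
      simp
  · intro y hne
    set w := y - u with hwdef
    have hw : w ≠ 0 := sub_ne_zero.2 hne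
    set ψ : ℝ → ℝ := fun t => φ (u + t • w) with hψ
    have hline : ∀ t : ℝ, HasDerivAt (fun t : ℝ => u + t • w) w t := by
      intro t
      simpa using ((hasDerivAt_id t).smul_const w).const_add u
    have hψd : ∀ t : ℝ, HasDerivAt ψ
        (t * ⟪w, fderiv ℝ (fun y => y - σ ^ 2 • g y) (u + t • w) w⟫) t := by
      intro t
      have := (hφfd (u + t • w)).comp_hasDerivAt t (hline t)
      refine this.congr_deriv (Eq.symm ?_)
      rw [toDual_apply_apply, add_sub_cancel_left, map_smul, real_inner_smul_left, real_inner_comm]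
    have hcont : ContinuousOn ψ (Set.Icc 0 1) := by
      intro t _
      exact ((hψd t).continuousAt).continuousWithinAt
    have hmono : StrictMonoOn ψ (Set.Icc (0:ℝ) 1) := by
      apply strictMonoOn_of_deriv_pos (convex_Icc 0 1) hcont
      intro t ht
      rw [interior_Icc] at ht
      rw [(hψd t).deriv]
      exact mul_pos ht.1 (hPD (u + t • w) w hw)
    have h01 := hmono (Set.left_mem_Icc.2 zero_le_one) (Set.right_mem_Icc.2 zero_le_one) zero_lt_one
    simpa [hψ, hwdef] using h01
end

section
/- Lower-boundedness of the augmented Lagrangian (exact case): suppose g, h: ℝⁿ → ℝ are bounded below, h has L-Lipschitz gradient, γL < 1, and points x, z, s ∈ ℝⁿ satisfy ∇h(z) = (1/γ)s. Then φ(x,z,s) := g(x) + h(z) + (1/γ)sᵀ(x - z) + (1/(2γ))‖x - z‖² ≥ g(x) + h(x), hence φ(x,z,s) ≥ inf g + inf h > -∞. -/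
open Set

lemma descent_lemma {n : ℕ} {L : ℝ} (h : EuclideanSpace ℝ (Fin n) → ℝ)
    (hdiff : Differentiable ℝ h)
    (hLip : ∀ x y, ‖gradient h x - gradient h y‖ ≤ L * ‖x - y‖)
    (x z : EuclideanSpace ℝ (Fin n)) :
    h x ≤ h z + (inner ℝ (gradient h z) (x - z) : ℝ) + L / 2 * ‖x - z‖ ^ 2 := by
  set v := x - z with hv
  have hc : ∀ t : ℝ, HasDerivAt (fun t : ℝ => h (z + t • v))
      ((inner ℝ (gradient h (z + t • v)) v : ℝ)) t := by
    intro t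
    have h1 : HasDerivAt (fun t : ℝ => z + t • v) v t := by
      simpa using ((hasDerivAt_id t).smul_const v).const_add z
    have h2 := (hdiff (z + t • v)).hasGradientAt.hasFDerivAt
    simpa [Function.comp_def] using h2.comp_hasDerivAt t h1
  have key : ∀ ⦃t : ℝ⦄, t ∈ Icc (0:ℝ) 1 →
      (fun t : ℝ => h (z + t • v)) t ≤
      (fun t : ℝ => h z + t * (inner ℝ (gradient h z) v : ℝ) + L * t ^ 2 / 2 * ‖v‖ ^ 2) t := by
    refine image_le_of_deriv_right_le_deriv_boundary
      (f := fun t : ℝ => h (z + t • v))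
      (f' := fun t => (inner ℝ (gradient h (z + t • v)) v : ℝ))
      (B := fun t : ℝ => h z + t * (inner ℝ (gradient h z) v : ℝ) + L * t ^ 2 / 2 * ‖v‖ ^ 2)
      (B' := fun t => (inner ℝ (gradient h z) v : ℝ) + L * t * ‖v‖ ^ 2)
      (fun t _ => ((hc t).continuousAt).continuousWithinAt)
      (fun t _ => (hc t).hasDerivWithinAt) (by simp) (by fun_prop) ?_ ?_
    · intro t _
      have hder : HasDerivAt (fun t : ℝ => h z + t * (inner ℝ (gradient h z) v : ℝ)
          + L * t ^ 2 / 2 * ‖v‖ ^ 2)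
          ((inner ℝ (gradient h z) v : ℝ) + L * t * ‖v‖ ^ 2) t := by
        have h1 : HasDerivAt (fun t : ℝ => t * (inner ℝ (gradient h z) v : ℝ))
            ((inner ℝ (gradient h z) v : ℝ)) t := by
          simpa using (hasDerivAt_id t).mul_const _
        have h2 : HasDerivAt (fun t : ℝ => L * t ^ 2 / 2 * ‖v‖ ^ 2)
            (L * t * ‖v‖ ^ 2) t := by
          have := (((hasDerivAt_pow 2 t).const_mul L).div_const 2).mul_const (‖v‖ ^ 2)
          refine this.congr_deriv ?_
          ring
        simpa [Pi.add_def] using (h1.const_add (h z)).add h2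
      exact hder.hasDerivWithinAt
    · intro t ht
      have hdecomp : (inner ℝ (gradient h (z + t • v)) v : ℝ) =
          (inner ℝ (gradient h z) v : ℝ) +
          (inner ℝ (gradient h (z + t • v) - gradient h z) v : ℝ) := by
        rw [inner_sub_left]; ring
      show (inner ℝ (gradient h (z + t • v)) v : ℝ) ≤ (inner ℝ (gradient h z) v : ℝ) + L * t * ‖v‖ ^ 2
      rw [hdecomp]
      gcongr
      calc (inner ℝ (gradient h (z + t • v) - gradient h z) v : ℝ)
          ≤ ‖gradient h (z + t • v) - gradient h z‖ * ‖v‖ :=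
            real_inner_le_norm _ _
        _ ≤ (L * ‖(z + t • v) - z‖) * ‖v‖ := by
            have := hLip (z + t • v) z
            nlinarith [norm_nonneg v]
        _ = L * t * ‖v‖ ^ 2 := by
            have : ‖(z + t • v) - z‖ = t * ‖v‖ := by
              simp [norm_smul, abs_of_nonneg ht.1]
            rw [this]; ring
  have := key (right_mem_Icc.2 zero_le_one)
  simpa [hv] using this

/-- Lower-boundedness of the augmented Lagrangian (exact case). -/
theorem stmt8 (n : ℕ) (γ L : ℝ) (hγ : 0 < γ) (hγL : γ * L < 1)
    (g h : EuclideanSpace ℝ (Fin n) → ℝ)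
    (hgbdd : BddBelow (Set.range g)) (hhbdd : BddBelow (Set.range h))
    (hdiff : Differentiable ℝ h)
    (hLip : ∀ x y, ‖gradient h x - gradient h y‖ ≤ L * ‖x - y‖)
    (x z s : EuclideanSpace ℝ (Fin n))
    (hopt : gradient h z = (1 / γ) • s) :
    g x + h x ≤
      g x + h z + (1 / γ) * (inner ℝ s (x - z) : ℝ) + (1 / (2 * γ)) * ‖x - z‖ ^ 2 ∧
    (⨅ y, g y) + (⨅ y, h y) ≤
      g x + h z + (1 / γ) * (inner ℝ s (x - z) : ℝ) + (1 / (2 * γ)) * ‖x - z‖ ^ 2 := by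
  have hd := descent_lemma h hdiff hLip x z
  rw [hopt, real_inner_smul_left] at hd
  have hL : L / 2 * ‖x - z‖ ^ 2 ≤ 1 / (2 * γ) * ‖x - z‖ ^ 2 := by
    have hL1 : L ≤ 1 / γ := by
      rw [le_div_iff₀ hγ]; nlinarith
    have : L / 2 ≤ 1 / (2 * γ) := by
      rw [div_le_iff₀ (by linarith : (0:ℝ) < 2)] at *
      rw [div_mul_eq_mul_div, le_div_iff₀ (by linarith : (0:ℝ) < 2*γ)]
      nlinarith
    nlinarith [sq_nonneg ‖x - z‖]
  have h1 : g x + h x ≤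
      g x + h z + (1 / γ) * (inner ℝ s (x - z) : ℝ) + (1 / (2 * γ)) * ‖x - z‖ ^ 2 := by
    linarith
  refine ⟨h1, le_trans ?_ h1⟩
  gcongr
  · exact ciInf_le hgbdd x
  · exact ciInf_le hhbdd x
end

section
/- Lagrangian dual-ascent increase bound: with sᵏ = sᵏ⁻¹ + xᵏ - zᵏ and ∇ĥ(zʲ) = (1/γ)sʲ for j = k-1, k, where ∇ĥ is L-Lipschitz, the augmented Lagrangian φ(x,z,s) = g(x) + h(z) + (1/γ)sᵀ(x-z) + (1/(2γ))‖x-z‖² satisfies φ(xᵏ, zᵏ, sᵏ) - φ(xᵏ, zᵏ, sᵏ⁻¹) = (1/γ)‖sᵏ - sᵏ⁻¹‖² ≤ γL²‖zᵏ - zᵏ⁻¹‖². -/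
/-- Lagrangian dual-ascent increase bound. -/
theorem stmt10 (n : ℕ) (γ L : ℝ) (hγ : 0 < γ) (hL : 0 ≤ L)
    (g h hhat : EuclideanSpace ℝ (Fin n) → ℝ)
    (hLip : ∀ x y, ‖gradient hhat x - gradient hhat y‖ ≤ L * ‖x - y‖)
    (xk zk zk1 sk sk1 : EuclideanSpace ℝ (Fin n))
    (hdual : sk = sk1 + xk - zk)
    (hoptk : gradient hhat zk = (1 / γ) • sk)
    (hoptk1 : gradient hhat zk1 = (1 / γ) • sk1)
    (φ : EuclideanSpace ℝ (Fin n) → EuclideanSpace ℝ (Fin n) →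
          EuclideanSpace ℝ (Fin n) → ℝ)
    (hφ : ∀ x z s, φ x z s = g x + h z + (1 / γ) * (inner ℝ s (x - z) : ℝ)
        + (1 / (2 * γ)) * ‖x - z‖ ^ 2) :
    φ xk zk sk - φ xk zk sk1 = (1 / γ) * ‖sk - sk1‖ ^ 2 ∧
    φ xk zk sk - φ xk zk sk1 ≤ γ * L ^ 2 * ‖zk - zk1‖ ^ 2 := by
  have hd : sk - sk1 = xk - zk := by
    rw [hdual]; abel
  have heq : φ xk zk sk - φ xk zk sk1 = (1 / γ) * ‖sk - sk1‖ ^ 2 := by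
    rw [hφ, hφ]
    have : (inner ℝ sk (xk - zk) : ℝ) - inner ℝ sk1 (xk - zk)
        = inner ℝ (sk - sk1) (sk - sk1) := by
      rw [← inner_sub_left, hd]
    rw [real_inner_self_eq_norm_sq] at this
    linear_combination (1 / γ) * this
  refine ⟨heq, ?_⟩
  rw [heq]
  have hlip := hLip zk zk1
  rw [hoptk, hoptk1, ← smul_sub, norm_smul] at hlip
  have h1 : ‖sk - sk1‖ ≤ γ * L * ‖zk - zk1‖ := by
    have hγ' : ‖(1 / γ : ℝ)‖ = 1 / γ := by
      rw [Real.norm_eq_abs, abs_of_pos (by positivity)]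
    rw [hγ', div_mul_eq_mul_div, div_le_iff₀ hγ] at hlip
    nlinarith
  have h0 : (0:ℝ) ≤ ‖sk - sk1‖ := norm_nonneg _
  have h2 : (0:ℝ) ≤ ‖zk - zk1‖ := norm_nonneg _
  have hsq : ‖sk - sk1‖ ^ 2 ≤ (γ * L * ‖zk - zk1‖) ^ 2 := by
    nlinarith
  calc (1 / γ) * ‖sk - sk1‖ ^ 2 ≤ (1 / γ) * (γ * L * ‖zk - zk1‖) ^ 2 := by
        apply mul_le_mul_of_nonneg_left hsq (by positivity)
    _ = γ * L ^ 2 * ‖zk - zk1‖ ^ 2 := by field_simp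
end

section
/- Gradient bound per iteration (exact case): under the PnP-ADMM optimality conditions ∇g(xᵏ) + (1/γ)(xᵏ + sᵏ⁻¹ - zᵏ⁻¹) = 0 and ∇h(zᵏ) + (1/γ)(zᵏ - xᵏ - sᵏ⁻¹) = 0, the dual update sᵏ = sᵏ⁻¹ + xᵏ - zᵏ, and L-Lipschitz continuity of ∇h, the objective f = g + h satisfies ‖∇f(xᵏ)‖ ≤ (1/γ + γL²)‖zᵏ - zᵏ⁻¹‖. -/
/-- Per-iteration gradient bound for exact PnP-ADMM:
`‖∇f(xᵏ)‖ ≤ (1/γ + γL²)‖zᵏ - zᵏ⁻¹‖` for `f = g + h`. -/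
theorem stmt14 (n : ℕ) (γ L : ℝ) (hγ : 0 < γ) (hL : 0 ≤ L)
    (g h : EuclideanSpace ℝ (Fin n) → ℝ)
    (hgdiff : Differentiable ℝ g) (hhdiff : Differentiable ℝ h)
    (hLip : ∀ x y, ‖gradient h x - gradient h y‖ ≤ L * ‖x - y‖)
    (xk zk zk1 sk sk1 : EuclideanSpace ℝ (Fin n))
    (hxopt : gradient g xk + (1 / γ) • (xk + sk1 - zk1) = 0)
    (hzopt : gradient h zk + (1 / γ) • (zk - xk - sk1) = 0)
    (hzopt1 : gradient h zk1 = (1 / γ) • sk1)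
    (hdual : sk = sk1 + xk - zk)
    (f : EuclideanSpace ℝ (Fin n) → ℝ)
    (hf : ∀ x, f x = g x + h x) :
    ‖gradient f xk‖ ≤ (1 / γ + γ * L ^ 2) * ‖zk - zk1‖ := by
  have hfe : f = fun x => g x + h x := funext hf
  have hgrad : gradient f xk = gradient g xk + gradient h xk := by
    have hfd : fderiv ℝ f xk = fderiv ℝ g xk + fderiv ℝ h xk := by
      rw [hfe]; exact fderiv_add (hgdiff xk) (hhdiff xk)
    simp only [gradient, hfd, map_add]
  -- xk - zk = γ • (∇h zk - ∇h zk1)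
  have hγne : γ ≠ 0 := ne_of_gt hγ
  have hxz : xk - zk = γ • (gradient h zk - gradient h zk1) := by
    have h1 : gradient h zk = (1 / γ) • (xk + sk1 - zk) := by
      have := hzopt
      have : gradient h zk = -((1 / γ) • (zk - xk - sk1)) := by linear_combination (norm := abel) hzopt
      rw [this, ← smul_neg]; congr 1; abel
    rw [h1, hzopt1, ← smul_sub, smul_smul]
    field_simp
    abel_nf; simp
  have hxzn : ‖xk - zk‖ ≤ γ * L * ‖zk - zk1‖ := by
    rw [hxz, norm_smul, Real.norm_eq_abs, abs_of_pos hγ, mul_assoc]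
    exact mul_le_mul_of_nonneg_left (hLip zk zk1) (le_of_lt hγ)
  -- gradient f xk = (1/γ) • (zk1 - zk) + (gradient h xk - gradient h zk)
  have hkey : gradient f xk = (1 / γ) • (zk1 - zk) + (gradient h xk - gradient h zk) := by
    rw [hgrad]
    have hg : gradient g xk = -((1 / γ) • (xk + sk1 - zk1)) := by
      linear_combination (norm := abel) hxopt
    have hz : gradient h zk = -((1 / γ) • (zk - xk - sk1)) := by
      linear_combination (norm := abel) hzopt
    rw [hg, hz]
    match_scalars <;> ring
  rw [hkey]
  calc ‖(1 / γ) • (zk1 - zk) + (gradient h xk - gradient h zk)‖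
      ≤ ‖(1 / γ) • (zk1 - zk)‖ + ‖gradient h xk - gradient h zk‖ := norm_add_le _ _
    _ ≤ (1 / γ) * ‖zk - zk1‖ + L * ‖xk - zk‖ := by
        gcongr
        · rw [norm_smul, Real.norm_eq_abs, abs_of_pos (by positivity : (0:ℝ) < 1/γ),
            norm_sub_rev]
        · exact hLip xk zk
    _ ≤ (1 / γ) * ‖zk - zk1‖ + L * (γ * L * ‖zk - zk1‖) := by gcongr
    _ = (1 / γ + γ * L ^ 2) * ‖zk - zk1‖ := by ring
end

section
/- Gradient bound per iteration (mismatched case): under the optimality conditions ∇h(z̄ᵏ) + (1/γ)(z̄ᵏ - xᵏ - sᵏ⁻¹) = 0 and ∇g(xᵏ) + (1/γ)(xᵏ + sᵏ⁻¹ - zᵏ⁻¹) = 0, with ∇h L-Lipschitz, ‖zᵏ - z̄ᵏ‖ ≤ δ_k, and ‖xᵏ - zᵏ‖ ≤ γL‖zᵏ - zᵏ⁻¹‖, one has ‖∇f(xᵏ)‖ ≤ (1/γ + γL²)‖zᵏ - zᵏ⁻¹‖ + (1/γ + L)δ_k, and consequently ‖∇f(xᵏ)‖² ≤ 2(1/γ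 + γL²)²‖zᵏ - zᵏ⁻¹‖² + 2(1/γ + L)²δ_k². -/
set_option maxHeartbeats 1000000 in
/-- Per-iteration gradient bound for PnP-ADMM with a mismatched denoiser. -/
theorem stmt15 (n : ℕ) (γ L δ : ℝ) (hγ : 0 < γ) (hL : 0 ≤ L) (hδ : 0 ≤ δ)
    (g h : EuclideanSpace ℝ (Fin n) → ℝ)
    (hgdiff : Differentiable ℝ g) (hhdiff : Differentiable ℝ h)
    (hLip : ∀ x y, ‖gradient h x - gradient h y‖ ≤ L * ‖x - y‖)
    (xk zk zbar zk1 sk1 : EuclideanSpace ℝ (Fin n))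
    (hzbaropt : gradient h zbar + (1 / γ) • (zbar - xk - sk1) = 0)
    (hxopt : gradient g xk + (1 / γ) • (xk + sk1 - zk1) = 0)
    (hmis : ‖zk - zbar‖ ≤ δ)
    (hxz : ‖xk - zk‖ ≤ γ * L * ‖zk - zk1‖)
    (f : EuclideanSpace ℝ (Fin n) → ℝ)
    (hf : ∀ x, f x = g x + h x) :
    ‖gradient f xk‖ ≤ (1 / γ + γ * L ^ 2) * ‖zk - zk1‖ + (1 / γ + L) * δ ∧
    ‖gradient f xk‖ ^ 2 ≤ 2 * (1 / γ + γ * L ^ 2) ^ 2 * ‖zk - zk1‖ ^ 2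
        + 2 * (1 / γ + L) ^ 2 * δ ^ 2 := by
  have hfeq : f = fun x => g x + h x := funext hf
  have hgradf : gradient f xk = gradient g xk + gradient h xk := by
    have : HasGradientAt f (gradient g xk + gradient h xk) xk := by
      rw [hfeq, hasGradientAt_iff_hasFDerivAt, map_add]
      exact ((hgdiff xk).hasGradientAt.hasFDerivAt.add
        (hhdiff xk).hasGradientAt.hasFDerivAt)
    exact this.gradient
  have hg' : gradient g xk = (1 / γ) • (zk1 - xk - sk1) := by
    have h1 := eq_neg_of_add_eq_zero_left hxopt
    rw [h1, ← smul_neg]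
    congr 1
    abel
  have hh' : gradient h zbar = (1 / γ) • (xk + sk1 - zbar) := by
    have h1 := eq_neg_of_add_eq_zero_left hzbaropt
    rw [h1, ← smul_neg]
    congr 1
    abel
  have key : gradient f xk
      = (1 / γ) • (zk1 - zbar) + (gradient h xk - gradient h zbar) := by
    rw [hgradf, hg', hh']
    module
  have hγ' : (0 : ℝ) < 1 / γ := by positivity
  have ha : (0 : ℝ) ≤ ‖zk - zk1‖ := norm_nonneg _
  have h2 : ‖zk1 - zbar‖ ≤ ‖zk - zk1‖ + δ := by
    calc ‖zk1 - zbar‖ = ‖(zk1 - zk) + (zk - zbar)‖ := by congr 1; abel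
      _ ≤ ‖zk1 - zk‖ + ‖zk - zbar‖ := norm_add_le _ _
      _ ≤ ‖zk - zk1‖ + δ := by rw [norm_sub_rev]; linarith
  have h3 : ‖gradient h xk - gradient h zbar‖ ≤ L * (γ * L * ‖zk - zk1‖ + δ) := by
    have h4 : ‖xk - zbar‖ ≤ γ * L * ‖zk - zk1‖ + δ := by
      calc ‖xk - zbar‖ = ‖(xk - zk) + (zk - zbar)‖ := by congr 1; abel
        _ ≤ ‖xk - zk‖ + ‖zk - zbar‖ := norm_add_le _ _
        _ ≤ γ * L * ‖zk - zk1‖ + δ := by linarith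
    calc ‖gradient h xk - gradient h zbar‖ ≤ L * ‖xk - zbar‖ := hLip xk zbar
      _ ≤ L * (γ * L * ‖zk - zk1‖ + δ) := by nlinarith
  have hmain : ‖gradient f xk‖ ≤ (1 / γ + γ * L ^ 2) * ‖zk - zk1‖ + (1 / γ + L) * δ := by
    calc ‖gradient f xk‖
        ≤ ‖(1 / γ) • (zk1 - zbar)‖ + ‖gradient h xk - gradient h zbar‖ := by
          rw [key]; exact norm_add_le _ _
      _ = (1 / γ) * ‖zk1 - zbar‖ + ‖gradient h xk - gradient h zbar‖ := by
          rw [norm_smul, Real.norm_eq_abs, abs_of_pos hγ']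
      _ ≤ (1 / γ) * (‖zk - zk1‖ + δ) + L * (γ * L * ‖zk - zk1‖ + δ) := by nlinarith
      _ = (1 / γ + γ * L ^ 2) * ‖zk - zk1‖ + (1 / γ + L) * δ := by
          field_simp; ring
  refine ⟨hmain, ?_⟩
  have hN : (0 : ℝ) ≤ ‖gradient f xk‖ := norm_nonneg _
  nlinarith [sq_nonneg ((1 / γ + γ * L ^ 2) * ‖zk - zk1‖ - (1 / γ + L) * δ),
    mul_nonneg (add_nonneg hγ'.le (by positivity : (0:ℝ) ≤ γ * L ^ 2)) ha,
    mul_nonneg (add_nonneg hγ'.le hL) hδ]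
end

section
/- Lower-boundedness of the augmented Lagrangian under mismatch: suppose g, h are bounded below, ∇h is L-Lipschitz, γ ≤ 1/(4L), ‖xᵏ - zᵏ‖ ≤ 2γLR, ‖z̄ᵏ - zᵏ‖ ≤ δ_k, and ∇h(z̄ᵏ) = (1/γ)sᵏ + (1/γ)(zᵏ - z̄ᵏ). Then φ(xᵏ, zᵏ, sᵏ) = g(xᵏ) + h(zᵏ) + (1/γ)(sᵏ)ᵀ(xᵏ - zᵏ) + (1/(2γ))‖xᵏ - zᵏ‖² > g(xᵏ) + h(xᵏ) - 2(1 + γL) R L δ_k. -/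
open InnerProductSpace

lemma descent_aux {n : ℕ} (L : ℝ) (hL : 0 ≤ L) (h : EuclideanSpace ℝ (Fin n) → ℝ)
    (hdiff : Differentiable ℝ h)
    (hLip : ∀ x y, ‖gradient h x - gradient h y‖ ≤ L * ‖x - y‖)
    (x z : EuclideanSpace ℝ (Fin n)) :
    |h x - h z - (inner ℝ (gradient h z) (x - z) : ℝ)| ≤ L * ‖x - z‖ * ‖x - z‖ := by
  have key := Convex.norm_image_sub_le_of_norm_hasFDerivWithin_le'
    (f := h) (f' := fun w => fderiv ℝ h w) (φ := fderiv ℝ h z)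
    (C := L * ‖x - z‖) (s := segment ℝ z x)
    (fun w _ => (hdiff w).hasFDerivAt.hasFDerivWithinAt)
    (fun w hw => by
      have h1 : ‖fderiv ℝ h w - fderiv ℝ h z‖ = ‖gradient h w - gradient h z‖ := by
        rw [gradient, gradient, ← map_sub, LinearIsometryEquiv.norm_map]
      rw [h1]
      obtain ⟨a, b, ha, hb, hab, rfl⟩ := hw
      have hwz : (a • z + b • x) - z = b • (x - z) := by
        have ha' : a = 1 - b := by linarith
        rw [ha', sub_smul, one_smul, smul_sub]
        abel
      calc ‖gradient h (a • z + b • x) - gradient h z‖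
          ≤ L * ‖(a • z + b • x) - z‖ := hLip _ _
        _ = L * (b * ‖x - z‖) := by rw [hwz, norm_smul, Real.norm_eq_abs, abs_of_nonneg hb]
        _ ≤ L * ‖x - z‖ := by
            nlinarith [norm_nonneg (x - z),
              mul_nonneg (mul_nonneg hL (norm_nonneg (x - z))) (show (0:ℝ) ≤ 1 - b by linarith)])
    (convex_segment z x) (left_mem_segment ℝ z x) (right_mem_segment ℝ z x)
  have happ : (fderiv ℝ h z) (x - z) = (inner ℝ (gradient h z) (x - z) : ℝ) := by
    have : fderiv ℝ h z = toDual ℝ _ (gradient h z) := by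
      rw [gradient, LinearIsometryEquiv.apply_symm_apply]
    rw [this, toDual_apply_apply]
  rw [happ] at key
  simpa [Real.norm_eq_abs] using key

/-- Lower-boundedness of the augmented Lagrangian under denoiser mismatch. -/
theorem stmt18 (n : ℕ) (γ L R δ : ℝ) (hL : 0 < L) (hγ : 0 < γ)
    (hγL : γ ≤ 1 / (4 * L)) (hR : 0 < R) (hδ : 0 < δ)
    (g h : EuclideanSpace ℝ (Fin n) → ℝ)
    (hgbdd : BddBelow (Set.range g)) (hhbdd : BddBelow (Set.range h))
    (hdiff : Differentiable ℝ h)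
    (hLip : ∀ x y, ‖gradient h x - gradient h y‖ ≤ L * ‖x - y‖)
    (xk zk zbar sk : EuclideanSpace ℝ (Fin n))
    (hxz : ‖xk - zk‖ ≤ 2 * γ * L * R)
    (hmis : ‖zbar - zk‖ ≤ δ)
    (hopt : gradient h zbar = (1 / γ) • sk + (1 / γ) • (zk - zbar)) :
    g xk + h xk - 2 * (1 + γ * L) * R * L * δ <
      g xk + h zk + (1 / γ) * (inner ℝ sk (xk - zk) : ℝ)
        + (1 / (2 * γ)) * ‖xk - zk‖ ^ 2 := by
  set d := xk - zk with hd
  set t := ‖d‖ with ht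
  have ht0 : 0 ≤ t := norm_nonneg d
  have h4 : 4 * (γ * L) ≤ 1 := by
    rw [le_div_iff₀ (by positivity)] at hγL; linarith
  have hc : L < 1 / (2 * γ) := by
    rw [lt_div_iff₀ (by positivity)]; linarith
  set A := (inner ℝ (gradient h zk) d : ℝ) with hA
  set B := (inner ℝ (gradient h zbar) d : ℝ) with hB
  set C := (inner ℝ (zk - zbar) d : ℝ) with hC
  -- descent lemma
  have F1 : |h xk - h zk - A| ≤ L * t * t := descent_aux L hL.le h hdiff hLip xk zk
  -- sk in terms of gradient at zbar
  have hsk : sk = γ • gradient h zbar - (zk - zbar) := by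
    rw [hopt, smul_add, smul_smul, smul_smul, mul_one_div, div_self hγ.ne', one_smul]
    module
  have F4 : (inner ℝ sk d : ℝ) = γ * B - C := by
    rw [hsk, inner_sub_left, inner_smul_left, hB, hC]
    norm_num
  -- bounds
  have F2 : |B - A| ≤ L * δ * t := by
    rw [hA, hB, ← inner_sub_left]
    calc |(inner ℝ (gradient h zbar - gradient h zk) d : ℝ)|
        ≤ ‖gradient h zbar - gradient h zk‖ * ‖d‖ := abs_real_inner_le_norm _ _
      _ ≤ (L * ‖zbar - zk‖) * t := mul_le_mul_of_nonneg_right (hLip _ _) ht0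
      _ ≤ L * δ * t := by
          have := mul_le_mul_of_nonneg_left hmis hL.le
          nlinarith
  have F3 : |C| ≤ δ * t := by
    rw [hC]
    calc |(inner ℝ (zk - zbar) d : ℝ)| ≤ ‖zk - zbar‖ * ‖d‖ := abs_real_inner_le_norm _ _
      _ ≤ δ * t := by
          rw [norm_sub_rev]
          exact mul_le_mul_of_nonneg_right hmis ht0
  have htsq : t ^ 2 = t * t := sq t
  have hBC : (1 / γ) * (γ * B - C) = B - (1 / γ) * C := by
    field_simp
  rw [F4, htsq, hBC]
  rw [abs_le] at F1 F2 F3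
  clear_value t A B C
  clear hLip hopt hdiff hmis hsk F4 hgbdd hhbdd hA hB hC hd ht d
  have e1 : (1 / γ) * C ≤ (1 / γ) * (δ * t) :=
    mul_le_mul_of_nonneg_left F3.2 (by positivity)
  rcases lt_or_eq_of_le hxz with hlt | heq
  · have c1 : L * (t * t) ≤ (1 / (2 * γ)) * (t * t) :=
      mul_le_mul_of_nonneg_right hc.le (mul_nonneg ht0 ht0)
    have e4 : L * (δ * t) ≤ L * (δ * (2 * γ * L * R)) := by
      have : δ * t ≤ δ * (2 * γ * L * R) := mul_le_mul_of_nonneg_left hxz hδ.le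
      exact mul_le_mul_of_nonneg_left this hL.le
    have e5 : (1 / γ) * (δ * t) < (1 / γ) * (δ * (2 * γ * L * R)) := by
      have : δ * t < δ * (2 * γ * L * R) := by
        exact mul_lt_mul_of_pos_left hlt hδ
      exact mul_lt_mul_of_pos_left this (by positivity)
    have e6 : (1 / γ) * (δ * (2 * γ * L * R)) = 2 * L * R * δ := by
      field_simp
    linarith [F1.2, F2.1, e1, c1, e4, e5, e6]
  · have hT0 : 0 < t := by rw [heq]; positivity
    have c1 : L * (t * t) < (1 / (2 * γ)) * (t * t) := by
      have := mul_pos (sub_pos.mpr hc) (mul_pos hT0 hT0)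
      nlinarith
    have e4 : L * (δ * t) = 2 * γ * L ^ 2 * R * δ := by rw [heq]; ring
    have e5 : (1 / γ) * (δ * t) = 2 * L * R * δ := by
      rw [heq]; field_simp
    linarith [F1.2, F2.1, e1, c1, e4, e5]
end
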